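/- Amplitude formula for the public-key state under the Hadamard-transform attack: for all bit strings i, k, y of length n, the y-component of H^{⊗n} applied to e_i + e_{i+k} equals (1/√(2^n)) · (−1)^a · (1 + (−1)^c), where a is the number of indices l with y l = 1 and i l = 1, and c is the number of indices l with y l = 1 and k l = 1. -/

import Mathlib

open Matrix Finset

/-- Tensor product of a family of one-qubit matrices, as a matrix indexed by bit strings. -/
def tens {n : ℕ} (A : Fin n → Matrix (ZMod 2) (ZMod 2) ℂ) :
    Matrix (Fin n → ZMod 2) (Fin n → ZMod 2) ℂ :=
  Matrix.of fun x y => ∏ l, A l (x l) (y l)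

/-- The Hadamard matrix. -/
noncomputable def Hmat : Matrix (ZMod 2) (ZMod 2) ℂ :=
  (1 / Real.sqrt 2 : ℝ) • !![1, 1; 1, -1]

/-!
Each entry of `H` is `±1/√2`, with the sign `-1` exactly at `(1, 1)`, so the `(y, j)` entry of
`H^{⊗n}` is `(-1)^{#{l | y l = 1 ∧ j l = 1}} / √(2^n)`. This sign is a character in `j`: pointwise,
`[y l = 1 ∧ i l + k l = 1]` is the sum mod 2 of `[y l = 1 ∧ i l = 1]` and `[y l = 1 ∧ k l = 1]`.
Applying `H^{⊗n}` to `e_i + e_{i+k}` adds the columns `i` and `i + k`, and factoring out the sign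
at `i` gives the formula.
-/

lemma ZMod.eq_zero_or_eq_one (a : ZMod 2) : a = 0 ∨ a = 1 := by
  revert a
  decide

lemma Finset.prod_ite_eq_pow_card {ι M : Type*} [Fintype ι] [CommMonoid M] (p : ι → Prop)
    [DecidablePred p] (a : M) :
    ∏ l, (if p l then a else 1) = a ^ #(univ.filter p) := by
  rw [prod_ite, prod_const, prod_const_one, mul_one]

lemma ite_and_add_eq_mul {R : Type*} [Ring R] (a b c : ZMod 2) :
    (if a = 1 ∧ b + c = 1 then (-1 : R) else 1)
      = (if a = 1 ∧ b = 1 then -1 else 1) * (if a = 1 ∧ c = 1 then -1 else 1) := by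
  rcases a.eq_zero_or_eq_one with rfl | rfl <;> rcases b.eq_zero_or_eq_one with rfl | rfl <;>
    rcases c.eq_zero_or_eq_one with rfl | rfl <;> simp +decide

lemma Real.sqrt_pow {x : ℝ} (hx : 0 ≤ x) (n : ℕ) : √(x ^ n) = √x ^ n := by
  rw [Real.sqrt_eq_iff_eq_sq (by positivity) (by positivity), ← pow_mul, mul_comm, pow_mul,
    Real.sq_sqrt hx]

lemma Hmat_apply (a b : ZMod 2) :
    Hmat a b = (1 / √2 : ℝ) * (if a = 1 ∧ b = 1 then (-1 : ℂ) else 1) := by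
  -- `!![…]` is indexed by `Fin 2`, which `ZMod 2` unfolds to
  change (1 / √2 : ℝ) • (!![1, 1; 1, -1] : Matrix (Fin 2) (Fin 2) ℂ) a b = _
  rw [Complex.real_smul]
  congr 1
  rcases a.eq_zero_or_eq_one with rfl | rfl <;> rcases b.eq_zero_or_eq_one with rfl | rfl <;> rfl

lemma tens_hadamard_apply {n : ℕ} (y j : Fin n → ZMod 2) :
    tens (fun _ : Fin n => Hmat) y j
      = (1 / √(2 ^ n) : ℝ) * (-1 : ℂ) ^ #(univ.filter fun l => y l = 1 ∧ j l = 1) := by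
  simp only [tens, of_apply, Hmat_apply, prod_mul_distrib, prod_const, card_univ, Fintype.card_fin,
    prod_ite_eq_pow_card]
  rw [Real.sqrt_pow zero_le_two, ← _root_.one_div_pow, Complex.ofReal_pow]

lemma neg_one_pow_card_and_add {n : ℕ} (y i k : Fin n → ZMod 2) :
    (-1 : ℂ) ^ #(univ.filter fun l => y l = 1 ∧ (i + k) l = 1)
      = (-1 : ℂ) ^ #(univ.filter fun l => y l = 1 ∧ i l = 1)
        * (-1) ^ #(univ.filter fun l => y l = 1 ∧ k l = 1) := by
  simp only [← prod_ite_eq_pow_card, ← prod_mul_distrib, Pi.add_apply, ite_and_add_eq_mul]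

/-- Amplitude formula for `H^{⊗n} (e_i + e_{i⊕k})` at outcome `y`. -/
theorem hadamard_attack_amplitude {n : ℕ} (i k y : Fin n → ZMod 2) :
    ((tens fun _ : Fin n => Hmat) *ᵥ
        (Pi.single i (1 : ℂ) + Pi.single (i + k) (1 : ℂ))) y
      = (1 / Real.sqrt (2 ^ n) : ℝ)
          * (-1 : ℂ) ^ (Finset.univ.filter (fun l : Fin n => y l = 1 ∧ i l = 1)).card
          * (1 + (-1 : ℂ) ^ (Finset.univ.filter (fun l : Fin n => y l = 1 ∧ k l = 1)).card) := by
  rw [mulVec_add, mulVec_single_one, mulVec_single_one, Pi.add_apply, col_apply, col_apply,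
    tens_hadamard_apply, tens_hadamard_apply, neg_one_pow_card_and_add]
  ring
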